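/- Let (⋯ → G₂ → G₁ → G₀) be an inverse sequence of pointed sets satisfying the Mittag-Leffler condition whose inverse limit lim Gᵢ consists only of the basepoint thread. Then for each i there exists j > i such that the composite bonding map G_j → G_i is trivial, i.e. its image is the basepoint of G_i. -/

import Mathlib

/-- An inverse sequence of pointed sets `⋯ → X₂ → X₁ → X₀`, presented by its
compatible composite basepoint-preserving bonding maps `bond h : X j → X i` for
`i ≤ j`; the one-step bonding maps are `bond (Nat.le_succ i) : X (i+1) → X i`. -/
structure PointedInvSeq (X : ℕ → Type) (pt : ∀ i, X i) : Type where
  bond : ∀ ⦃i j : ℕ⦄, i ≤ j → X j → X i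
  bond_refl : ∀ i (x : X i), bond (le_refl i) x = x
  bond_comp : ∀ ⦃i j k : ℕ⦄ (hij : i ≤ j) (hjk : j ≤ k) (x : X k),
    bond (hij.trans hjk) x = bond hij (bond hjk x)
  bond_pt : ∀ ⦃i j : ℕ⦄ (h : i ≤ j), bond h (pt j) = pt i

namespace PointedInvSeq

variable {X : ℕ → Type} {pt : ∀ i, X i}

/-- The Mittag-Leffler condition: for each `i` there is `j > i` such that for all
`k > j` the image of `X k → X i` equals the image of `X j → X i`. -/
def MittagLeffler (S : PointedInvSeq X pt) : Prop :=
  ∀ i, ∃ j, ∃ hij : i < j, ∀ k, ∀ hjk : j < k,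
    Set.range (S.bond (hij.le.trans hjk.le)) = Set.range (S.bond hij.le)

end PointedInvSeq

/-!
An element of `X i` lying in the image of `X k` for every `k ≥ i` is *stable*. Under the
Mittag-Leffler condition the image of `X j → X i` (for `j` as in the condition) consists of stable
elements, and every stable element of `X n` has a stable preimage in `X (n + 1)`. Lifting step by
step therefore threads any such image point through the whole sequence, so it is the basepoint
when the inverse limit is trivial.
-/

namespace PointedInvSeq

variable {X : ℕ → Type} {pt : ∀ i, X i} (S : PointedInvSeq X pt)

def IsThread (g : ∀ i, X i) : Prop :=
  ∀ i, S.bond (Nat.le_succ i) (g (i + 1)) = g i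

def stableImage (n : ℕ) : Set (X n) :=
  {a | ∀ k (h : n ≤ k), a ∈ Set.range (S.bond h)}

theorem bond_mem_stableImage {n j : ℕ} (hnj : n ≤ j)
    (hj : ∀ k (hjk : j < k), Set.range (S.bond (hnj.trans hjk.le)) = Set.range (S.bond hnj))
    (y : X j) : S.bond hnj y ∈ S.stableImage n := by
  intro k hnk
  rcases le_or_gt k j with hkj | hjk
  · exact ⟨S.bond hkj y, (S.bond_comp hnk hkj y).symm⟩
  · change S.bond hnj y ∈ Set.range (S.bond (hnj.trans hjk.le))
    rw [hj k hjk]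
    exact Set.mem_range_self y

theorem stableImage_subset_image_bond (hML : S.MittagLeffler) (n : ℕ) :
    S.stableImage n ⊆ S.bond (Nat.le_succ n) '' S.stableImage (n + 1) := by
  intro a ha
  obtain ⟨j, hj, hjML⟩ := hML (n + 1)
  obtain ⟨y, rfl⟩ := ha j ((Nat.le_succ n).trans hj.le)
  exact ⟨S.bond hj.le y, S.bond_mem_stableImage hj.le hjML y, (S.bond_comp _ _ y).symm⟩

theorem bond_add_eq_of_tail {i : ℕ} (f : ∀ n, X (i + n))
    (hf : ∀ n, S.bond (Nat.le_succ (i + n)) (f (n + 1)) = f n) (n : ℕ) :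
    S.bond (Nat.le_add_right i n) (f n) = f 0 := by
  induction n with
  | zero => exact S.bond_refl i (f 0)
  | succ n ih => rw [S.bond_comp (Nat.le_add_right i n) (Nat.le_succ (i + n)), hf n, ih]

theorem exists_isThread_of_tail {i : ℕ} (f : ∀ n, X (i + n))
    (hf : ∀ n, S.bond (Nat.le_succ (i + n)) (f (n + 1)) = f n) :
    ∃ g, S.IsThread g ∧ g i = f 0 := by
  refine ⟨fun m => S.bond (Nat.le_add_left m i) (f m), fun m => ?_, S.bond_add_eq_of_tail f hf i⟩
  dsimp only
  rw [← S.bond_comp, ← hf m, ← S.bond_comp]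

theorem exists_isThread_of_mem_stableImage (hML : S.MittagLeffler) {i : ℕ} {a : X i}
    (ha : a ∈ S.stableImage i) : ∃ g, S.IsThread g ∧ g i = a := by
  choose lift hlift_mem hlift using
    fun n (b : S.stableImage n) => S.stableImage_subset_image_bond hML n b.2
  let f : ∀ n, S.stableImage (i + n) :=
    fun n => Nat.rec ⟨a, ha⟩ (fun n b => ⟨lift (i + n) b, hlift_mem (i + n) b⟩) n
  exact S.exists_isThread_of_tail (fun n => (f n).1) (fun n => hlift (i + n) (f n))

end PointedInvSeq

/-- If an inverse sequence of pointed sets satisfies the Mittag-Leffler condition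
and its inverse limit consists only of the basepoint thread, then for each `i`
there exists `j > i` such that the composite bonding map `X j → X i` is trivial. -/
theorem exists_trivial_bond_of_mittagLeffler_of_lim_trivial
    {X : ℕ → Type} (pt : ∀ i, X i) (S : PointedInvSeq X pt)
    (hML : S.MittagLeffler)
    (hlim : ∀ g : ∀ i, X i,
      (∀ i, S.bond (Nat.le_succ i) (g (i + 1)) = g i) → ∀ i, g i = pt i) :
    ∀ i, ∃ j, ∃ hij : i < j, ∀ x : X j, S.bond hij.le x = pt i := by
  intro i
  obtain ⟨j, hij, hjML⟩ := hML i
  refine ⟨j, hij, fun x => ?_⟩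
  obtain ⟨g, hg, hgi⟩ :=
    S.exists_isThread_of_mem_stableImage hML (S.bond_mem_stableImage hij.le hjML x)
  rw [← hgi]
  exact hlim g hg i
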